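/- In R = k[[t^7, t^8, t^9, t^{11}]], the trace ideal of I = (t^8, t^9, t^{21}) is tr_R(I) = (t^7, t^8, t^9). -/

import Mathlib

set_option synthInstance.maxHeartbeats 1000000
set_option maxHeartbeats 1000000

open HahnSeries

/-- The numerical semigroup generated by `7, 8, 9, 11`. -/
def valSG : AddSubmonoid ℕ := AddSubmonoid.closure {7, 8, 9, 11}

/-- The numerical semigroup ring `R = k[[t⁷, t⁸, t⁹, t¹¹]]`, realized as the subring of
the Laurent series field `k((t))` consisting of (power) series supported on the numerical
semigroup `⟨7, 8, 9, 11⟩`. -/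
def NSR (k : Type*) [Field k] : Subring (LaurentSeries k) where
  carrier := {x | ∀ n : ℤ, x.coeff n ≠ 0 → ∃ m ∈ valSG, (m : ℤ) = n}
  mul_mem' := by
    intro a b ha hb n hn
    rw [HahnSeries.coeff_mul] at hn
    obtain ⟨ij, hij, hne⟩ := Finset.exists_ne_zero_of_sum_ne_zero hn
    rw [Finset.mem_addAntidiagonal] at hij
    obtain ⟨m1, hm1, he1⟩ := ha ij.1 (fun h => hne (by rw [h, zero_mul]))
    obtain ⟨m2, hm2, he2⟩ := hb ij.2 (fun h => hne (by rw [h, mul_zero]))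
    exact ⟨m1 + m2, add_mem hm1 hm2, by push_cast; rw [he1, he2]; exact hij.2.2⟩
  one_mem' := by
    intro n hn
    rcases eq_or_ne n 0 with h | h
    · exact ⟨0, zero_mem _, by simp [h]⟩
    · exact absurd (by simpa using HahnSeries.coeff_single_of_ne (r := (1 : k)) h) hn
  add_mem' := by
    intro a b ha hb n hn
    rw [HahnSeries.coeff_add] at hn
    by_cases h : a.coeff n = 0
    · exact hb n (by intro hb0; exact hn (by rw [h, hb0, add_zero]))
    · exact ha n h
  zero_mem' := by intro n hn; simp at hn
  neg_mem' := by
    intro a ha n hn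
    exact ha n (by intro h0; exact hn (by rw [HahnSeries.coeff_neg, h0, neg_zero]))

theorem single_mem_NSR {k : Type*} [Field k] {n : ℕ} (hn : n ∈ valSG) :
    (HahnSeries.single (n : ℤ) (1 : k) : LaurentSeries k) ∈ NSR k := by
  intro m hm
  rcases eq_or_ne m (n : ℤ) with h | h
  · exact ⟨n, hn, h.symm⟩
  · exact absurd (HahnSeries.coeff_single_of_ne h) hm

theorem mem_valSG_7 : (7 : ℕ) ∈ valSG := AddSubmonoid.subset_closure (by simp)
theorem mem_valSG_8 : (8 : ℕ) ∈ valSG := AddSubmonoid.subset_closure (by simp)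
theorem mem_valSG_9 : (9 : ℕ) ∈ valSG := AddSubmonoid.subset_closure (by simp)
theorem mem_valSG_11 : (11 : ℕ) ∈ valSG := AddSubmonoid.subset_closure (by simp)
theorem mem_valSG_21 : (21 : ℕ) ∈ valSG := by
  have := add_mem (add_mem mem_valSG_7 mem_valSG_7) mem_valSG_7
  norm_num at this ⊢; exact this

theorem tpow_mem {k : Type*} [Field k] {n : ℕ} (hn : n ∈ valSG) :
    (HahnSeries.single (1 : ℤ) (1 : k)) ^ n ∈ NSR k := by
  rw [HahnSeries.single_pow]
  simpa using single_mem_NSR hn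

/-- `t`, the uniformizer of `k[[t]] ⊆ k((t))`. -/
noncomputable def tE (k : Type*) [Field k] : LaurentSeries k := HahnSeries.single 1 1

theorem tE_pow_mem {k : Type*} [Field k] {n : ℕ} (hn : n ∈ valSG) : tE k ^ n ∈ NSR k :=
  tpow_mem hn

/-- `t⁷` as an element of `R = k[[t⁷,t⁸,t⁹,t¹¹]]`. -/
noncomputable def t7 (k : Type*) [Field k] : ↥(NSR k) := ⟨tE k ^ 7, tE_pow_mem mem_valSG_7⟩
/-- `t⁸` as an element of `R`. -/
noncomputable def t8 (k : Type*) [Field k] : ↥(NSR k) := ⟨tE k ^ 8, tE_pow_mem mem_valSG_8⟩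
/-- `t⁹` as an element of `R`. -/
noncomputable def t9 (k : Type*) [Field k] : ↥(NSR k) := ⟨tE k ^ 9, tE_pow_mem mem_valSG_9⟩
/-- `t¹¹` as an element of `R`. -/
noncomputable def t11 (k : Type*) [Field k] : ↥(NSR k) := ⟨tE k ^ 11, tE_pow_mem mem_valSG_11⟩
/-- `t²¹` as an element of `R`. -/
noncomputable def t21 (k : Type*) [Field k] : ↥(NSR k) := ⟨tE k ^ 21, tE_pow_mem mem_valSG_21⟩

theorem coeff_eq_zero_of_neg_of_mem {k : Type*} [Field k] {x : LaurentSeries k}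
    (hx : x ∈ NSR k) {n : ℤ} (hn : n < 0) : x.coeff n = 0 := by
  by_contra h
  obtain ⟨m, -, hm⟩ := hx n h
  omega

/-- The power series ring `k[[t]]` (the integral closure of `R`), as an `R`-submodule of
`k((t))`. -/
def PSpart (k : Type*) [Field k] : Submodule ↥(NSR k) (LaurentSeries k) where
  carrier := {x | ∀ n : ℤ, n < 0 → x.coeff n = 0}
  zero_mem' := by intro n _; simp
  add_mem' := by intro a b ha hb n hn; rw [HahnSeries.coeff_add, ha n hn, hb n hn, add_zero]
  smul_mem' := by
    intro c x hx n hn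
    show ((c : LaurentSeries k) * x).coeff n = 0
    rw [HahnSeries.coeff_mul]
    apply Finset.sum_eq_zero
    intro ij hij
    rw [Finset.mem_addAntidiagonal] at hij
    rcases lt_or_ge ij.1 0 with h | h
    · rw [coeff_eq_zero_of_neg_of_mem c.2 h, zero_mul]
    · rcases lt_or_ge ij.2 0 with h2 | h2
      · rw [hx ij.2 h2, mul_zero]
      · exact absurd hij.2.2 (by omega)

/-- The conductor ideal `C = R : k[[t]] = {r ∈ R | r·k[[t]] ⊆ R}` of `R = k[[t⁷,t⁸,t⁹,t¹¹]]`. -/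
noncomputable def condNSR (k : Type*) [Field k] : Ideal ↥(NSR k) :=
  Submodule.colon (R := ↥(NSR k)) (M := LaurentSeries k)
    (1 : Submodule ↥(NSR k) (LaurentSeries k)) (PSpart k)

noncomputable def traceIdeal (R : Type*) [CommRing R] (M : Type*) [AddCommGroup M]
    [Module R M] : Ideal R :=
  ⨆ f : M →ₗ[R] R, LinearMap.range f

/-!
An `R`-linear `f : I → R` satisfies `f(u) w = f(w) u` for `u, w ∈ I`. Taking `u, w` among the
monomials `t⁸, t⁹, t²¹`, the coefficients of `f(t⁸)`, `f(t⁹)`, `f(t²¹)` at `t⁰` and `t¹¹` become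
coefficients of `f(t⁸)` or `f(t⁹)` at the gaps `-13, -2, -1, 1, 10, 12` of `⟨7, 8, 9, 11⟩`, hence
vanish; and the elements of `R` without `t⁰` and `t¹¹` terms lie in `(t⁷, t⁸, t⁹)`. Conversely
`t⁻¹ I ⊆ R`, so multiplication by `t⁻¹` is a map `I → R` sending `t⁸` to `t⁷`, and
`t⁸, t⁹ ∈ I ⊆ tr(I)`.
-/

theorem Subring.mul_mem_of_mem_span {A : Type*} [CommRing A] {S : Subring A} {g : A} {s : Set S}
    (hs : ∀ x ∈ s, g * x ∈ S) {x : S} (hx : x ∈ Ideal.span s) : g * x ∈ S := by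
  induction hx using Submodule.span_induction with
  | mem y hy => exact hs y hy
  | zero => simp
  | add y z _ _ hy hz => rw [Subring.coe_add, mul_add]; exact add_mem hy hz
  | smul r y _ hy => rw [smul_eq_mul, Subring.coe_mul, mul_left_comm]; exact mul_mem r.2 hy

def Ideal.colonMul {A : Type*} [CommRing A] {S : Subring A} (I : Ideal S) (g : A)
    (hg : ∀ x ∈ I, g * x ∈ S) : I →ₗ[S] S where
  toFun x := ⟨g * x, hg x x.2⟩
  map_add' x y := Subtype.ext (mul_add g x y)
  map_smul' r x := Subtype.ext (mul_left_comm g r x)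

theorem range_le_traceIdeal {R M : Type*} [CommRing R] [AddCommGroup M] [Module R M]
    (f : M →ₗ[R] R) : LinearMap.range f ≤ traceIdeal R M :=
  le_iSup (fun f : M →ₗ[R] R => LinearMap.range f) f

theorem Ideal.le_traceIdeal {R : Type*} [CommRing R] (I : Ideal R) : I ≤ traceIdeal R I := by
  simpa using range_le_traceIdeal I.subtype

theorem Ideal.apply_mul_eq_apply_mul {R : Type*} [CommRing R] {I : Ideal R} (f : I →ₗ[R] R)
    (u w : I) : f u * w = f w * u := by
  have h : (w : R) • u = (u : R) • w := Subtype.ext (mul_comm _ _)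
  simpa only [map_smul, smul_eq_mul, mul_comm] using congrArg f h

theorem mem_valSG_iff {m : ℕ} :
    m ∈ valSG ↔ m = 0 ∨ m = 7 ∨ m = 8 ∨ m = 9 ∨ m = 11 ∨ 14 ≤ m := by
  refine ⟨fun hm => ?_, fun hm => ?_⟩
  · induction hm using AddSubmonoid.closure_induction with
    | mem x hx => simp only [Set.mem_insert_iff, Set.mem_singleton_iff] at hx; omega
    | zero => omega
    | add x y _ _ hx hy => omega
  induction m using Nat.strong_induction_on with
  | _ m ih =>
    rcases hm with rfl | rfl | rfl | rfl | rfl | hm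
    · exact zero_mem _
    · exact mem_valSG_7
    · exact mem_valSG_8
    · exact mem_valSG_9
    · exact mem_valSG_11
    by_cases hsum : m = 17 ∨ m = 19 ∨ m = 20
    · rcases hsum with rfl | rfl | rfl
      exacts [add_mem mem_valSG_8 mem_valSG_9, add_mem mem_valSG_8 mem_valSG_11,
        add_mem mem_valSG_9 mem_valSG_11]
    · have h := add_mem (ih (m - 7) (by omega) (by omega)) mem_valSG_7
      rwa [Nat.sub_add_cancel (by omega)] at h

section

variable {k : Type*} [Field k]

theorem mem_NSR_iff {x : LaurentSeries k} :
    x ∈ NSR k ↔ ∀ n : ℤ, x.coeff n ≠ 0 →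
      n = 0 ∨ n = 7 ∨ n = 8 ∨ n = 9 ∨ n = 11 ∨ 14 ≤ n := by
  refine forall₂_congr fun n _ => ⟨?_, fun hn => ⟨n.toNat, mem_valSG_iff.2 (by omega), by omega⟩⟩
  rintro ⟨m, hm, rfl⟩
  have := mem_valSG_iff.1 hm
  omega

theorem coeff_eq_zero_of_mem_NSR {x : LaurentSeries k} (hx : x ∈ NSR k) {n : ℤ}
    (hn : n < 0 ∨ n = 1 ∨ n = 10 ∨ n = 12) : x.coeff n = 0 := by
  by_contra h
  have := mem_NSR_iff.1 hx n h
  omega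

theorem single_mem_NSR_of_mem_valSG {n : ℕ} (hn : n ∈ valSG) (a : k) :
    (single (n : ℤ) a : LaurentSeries k) ∈ NSR k := by
  intro m hm
  obtain rfl : m = n := by_contra fun h => hm (coeff_single_of_ne h)
  exact ⟨n, hn, rfl⟩

theorem tE_pow (n : ℕ) : tE k ^ n = single (n : ℤ) 1 := by
  rw [tE, single_pow, one_pow, nsmul_one]

theorem coe_t7 : (t7 k : LaurentSeries k) = single 7 1 := tE_pow 7
theorem coe_t8 : (t8 k : LaurentSeries k) = single 8 1 := tE_pow 8
theorem coe_t9 : (t9 k : LaurentSeries k) = single 9 1 := tE_pow 9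
theorem coe_t21 : (t21 k : LaurentSeries k) = single 21 1 := tE_pow 21

theorem single_neg_seven_mul_sub_mem_NSR {x : LaurentSeries k} (hx : x ∈ NSR k)
    (h0 : x.coeff 0 = 0) (h11 : x.coeff 11 = 0) :
    single (-7) 1 * (x - (single 8 (x.coeff 8) + single 17 (x.coeff 17) + single 19 (x.coeff 19)
      + single 9 (x.coeff 9) + single 20 (x.coeff 20))) ∈ NSR k := by
  -- `8, 9, 17, 19, 20` are the exponents of `R` other than `0, 11` that are not in `7 + valSG`
  refine mem_NSR_iff.2 fun n hn => ?_
  obtain ⟨m, rfl⟩ : ∃ m, n = m - 7 := ⟨n + 7, by omega⟩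
  have hx' : x.coeff m ≠ 0 → m = 7 ∨ m = 8 ∨ m = 9 ∨ 14 ≤ m := fun h => by
    rcases mem_NSR_iff.1 hx m h with rfl | _ | _ | _ | rfl | _ <;> first | omega | contradiction
  simp only [coeff_single_mul, one_mul, sub_neg_eq_add, sub_add_cancel, coeff_sub, coeff_add,
    coeff_single] at hn
  split_ifs at hn <;> first
    | omega
    | (simp only [add_zero, sub_zero] at hn; have := hx' hn; omega)
    | (subst_vars; simp at hn)

theorem mem_span_t7_t8_t9 {x : NSR k} (h0 : (x : LaurentSeries k).coeff 0 = 0)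
    (h11 : (x : LaurentSeries k).coeff 11 = 0) : x ∈ Ideal.span {t7 k, t8 k, t9 k} := by
  obtain ⟨x, hx⟩ := x
  let b : NSR k := ⟨single 0 (x.coeff 8) + single 9 (x.coeff 17) + single 11 (x.coeff 19),
    add_mem (add_mem (single_mem_NSR_of_mem_valSG (zero_mem _) _)
      (single_mem_NSR_of_mem_valSG mem_valSG_9 _)) (single_mem_NSR_of_mem_valSG mem_valSG_11 _)⟩
  let d : NSR k := ⟨single 0 (x.coeff 9) + single 11 (x.coeff 20),
    add_mem (single_mem_NSR_of_mem_valSG (zero_mem _) _)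
      (single_mem_NSR_of_mem_valSG mem_valSG_11 _)⟩
  let a : NSR k := ⟨_, single_neg_seven_mul_sub_mem_NSR hx h0 h11⟩
  have hinv : single (-7) 1 * single 7 1 = (1 : LaurentSeries k) := by
    rw [single_mul_single]; simp
  have hbd : ((b * t8 k + d * t9 k : NSR k) : LaurentSeries k) = single 8 (x.coeff 8)
      + single 17 (x.coeff 17) + single 19 (x.coeff 19) + single 9 (x.coeff 9)
      + single 20 (x.coeff 20) := by
    simp only [b, d, Subring.coe_add, Subring.coe_mul, coe_t8, coe_t9, add_mul,
      single_mul_single, mul_one]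
    norm_num
    abel
  have hdecomp : (⟨x, hx⟩ : NSR k) = a * t7 k + b * t8 k + d * t9 k := by
    apply Subtype.ext
    rw [add_assoc, Subring.coe_add, hbd, Subring.coe_mul, coe_t7, mul_right_comm, hinv, one_mul,
      sub_add_cancel]
  rw [hdecomp]
  refine add_mem (add_mem ?_ ?_) ?_ <;>
    exact Ideal.mul_mem_left _ _ (Ideal.subset_span (by simp))

theorem coeff_apply_eq_coeff_apply {I : Ideal (NSR k)} (f : I →ₗ[NSR k] NSR k) (u w : I)
    {p q : ℤ} (hu : ((u : NSR k) : LaurentSeries k) = single p 1)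
    (hw : ((w : NSR k) : LaurentSeries k) = single q 1) (n : ℤ) :
    ((f u : NSR k) : LaurentSeries k).coeff n =
      ((f w : NSR k) : LaurentSeries k).coeff (n + q - p) := by
  have h := congrArg (fun y : NSR k => (y : LaurentSeries k).coeff (n + q))
    (I.apply_mul_eq_apply_mul f u w)
  simpa only [Subring.coe_mul, hu, hw, coeff_mul_single, mul_one, add_sub_cancel_right] using h

theorem coeff_apply_eq_zero (f : Ideal.span {t8 k, t9 k, t21 k} →ₗ[NSR k] NSR k)
    {u : Ideal.span {t8 k, t9 k, t21 k}} (hu : (u : NSR k) ∈ ({t8 k, t9 k, t21 k} : Set (NSR k)))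
    {n : ℤ} (hn : n = 0 ∨ n = 11) : ((f u : NSR k) : LaurentSeries k).coeff n = 0 := by
  have h8 : t8 k ∈ Ideal.span {t8 k, t9 k, t21 k} := Ideal.subset_span (by simp)
  have h9 : t9 k ∈ Ideal.span {t8 k, t9 k, t21 k} := Ideal.subset_span (by simp)
  rcases hu with hu | hu | hu
  · rw [coeff_apply_eq_coeff_apply f u ⟨t9 k, h9⟩ (by rw [hu, coe_t8]) coe_t9]
    exact coeff_eq_zero_of_mem_NSR (f _).2 (by omega)
  · rw [coeff_apply_eq_coeff_apply f u ⟨t8 k, h8⟩ (by rw [hu, coe_t9]) coe_t8]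
    exact coeff_eq_zero_of_mem_NSR (f _).2 (by omega)
  · rw [coeff_apply_eq_coeff_apply f u ⟨t8 k, h8⟩ (by rw [hu, coe_t21]) coe_t8]
    exact coeff_eq_zero_of_mem_NSR (f _).2 (by omega)

theorem traceIdeal_le_span_t7_t8_t9 :
    traceIdeal (NSR k) (Ideal.span {t8 k, t9 k, t21 k}) ≤ Ideal.span {t7 k, t8 k, t9 k} := by
  refine iSup_le fun f => ?_
  rw [LinearMap.range_eq_map, ← Submodule.span_span_coe_preimage, Submodule.map_span,
    Submodule.span_le]
  rintro _ ⟨u, hu, rfl⟩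
  exact mem_span_t7_t8_t9 (coeff_apply_eq_zero f hu (.inl rfl))
    (coeff_apply_eq_zero f hu (.inr rfl))

theorem single_neg_one_mul_mem_NSR {x : NSR k} (hx : x ∈ Ideal.span {t8 k, t9 k, t21 k}) :
    single (-1) 1 * (x : LaurentSeries k) ∈ NSR k := by
  refine Subring.mul_mem_of_mem_span (fun y hy => ?_) hx
  rcases hy with rfl | rfl | rfl
  · simpa [coe_t8, single_mul_single] using single_mem_NSR_of_mem_valSG mem_valSG_7 (1 : k)
  · simpa [coe_t9, single_mul_single] using single_mem_NSR_of_mem_valSG mem_valSG_8 (1 : k)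
  · simpa [coe_t21, single_mul_single] using
      single_mem_NSR_of_mem_valSG (n := 20) (mem_valSG_iff.2 (by norm_num)) (1 : k)

theorem span_t7_t8_t9_le_traceIdeal :
    Ideal.span {t7 k, t8 k, t9 k} ≤ traceIdeal (NSR k) (Ideal.span {t8 k, t9 k, t21 k}) := by
  have hI := (Ideal.span {t8 k, t9 k, t21 k}).le_traceIdeal
  rw [Ideal.span_le]
  rintro _ (rfl | rfl | rfl)
  · refine range_le_traceIdeal (Ideal.colonMul _ _ fun _ => single_neg_one_mul_mem_NSR)
      ⟨⟨t8 k, Ideal.subset_span (by simp)⟩, Subtype.ext ?_⟩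
    simp [Ideal.colonMul, coe_t7, coe_t8, single_mul_single]
  · exact hI (Ideal.subset_span (by simp))
  · exact hI (Ideal.subset_span (by simp))

end

theorem nsr_trace_of_ideal_general
    (k : Type*) [Field k] :
    traceIdeal ↥(NSR k) ↥(Ideal.span {t8 k, t9 k, t21 k}) =
      Ideal.span {t7 k, t8 k, t9 k} :=
  le_antisymm traceIdeal_le_span_t7_t8_t9 span_t7_t8_t9_le_traceIdeal

/-- In `R = k[[t⁷, t⁸, t⁹, t¹¹]]`, the trace ideal of
`I = (t⁸, t⁹, t²¹)` is `tr_R(I) = (t⁷, t⁸, t⁹)`. -/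
theorem nsr_trace_of_ideal
    (k : Type*) [Field k] [Infinite k] :
    traceIdeal ↥(NSR k) ↥(Ideal.span {t8 k, t9 k, t21 k}) =
      Ideal.span {t7 k, t8 k, t9 k} :=
  nsr_trace_of_ideal_general k
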